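/- arXiv:2502.18446 — 6 statements merged into one kernel-verified Lean document; each statement's English description precedes it below -/
import Mathlib

section
/- Hadamard's inequality for positive semidefinite matrices: for any n×n positive semidefinite complex matrix G, the product of the diagonal entries of G is greater than or equal to the determinant of G. -/
open Matrix ComplexOrder

/-!
Conjugating by the real diagonal matrix with entries `(G i i)^(-1/2)` reduces the inequality to
the case of unit diagonal. Then the trace is `n`, so the nonnegative eigenvalues `λ i` sum to `n`
and `∏ λ i ≤ ∏ exp (λ i - 1) = 1`. A zero diagonal entry forces the whole column to vanish.
-/

theorem Real.prod_le_one_of_sum_eq_card {ι : Type*} [Fintype ι] {x : ι → ℝ} (hx : ∀ i, 0 ≤ x i)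
    (hsum : ∑ i, x i = Fintype.card ι) : ∏ i, x i ≤ 1 :=
  calc ∏ i, x i ≤ ∏ i, Real.exp (x i - 1) :=
        Finset.prod_le_prod (fun i _ ↦ hx i) fun i _ ↦ by linarith [Real.add_one_le_exp (x i - 1)]
    _ = 1 := by simp [← Real.exp_sum, Finset.sum_sub_distrib, hsum]

namespace Matrix.PosSemidef

variable {n 𝕜 : Type*} [Fintype n] [DecidableEq n] [RCLike 𝕜] {A : Matrix n n 𝕜}

theorem det_le_one_of_diag_eq_one (hA : A.PosSemidef) (hdiag : ∀ i, A i i = 1) : A.det ≤ 1 := by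
  have htrace : ∑ i, hA.isHermitian.eigenvalues i = Fintype.card n := by
    have := hA.isHermitian.trace_eq_sum_eigenvalues
    simp only [trace, diag_apply, hdiag, Finset.sum_const, Finset.card_univ, nsmul_eq_mul,
      mul_one] at this
    exact_mod_cast this.symm
  rw [hA.isHermitian.det_eq_prod_eigenvalues, ← RCLike.ofReal_prod, ← RCLike.ofReal_one,
    RCLike.ofReal_le_ofReal]
  exact Real.prod_le_one_of_sum_eq_card hA.eigenvalues_nonneg htrace

theorem det_eq_zero_of_diag_eq_zero (hA : A.PosSemidef) {i : n} (hi : A i i = 0) : A.det = 0 := by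
  have hcol : A *ᵥ Pi.single i 1 = 0 := (hA.dotProduct_mulVec_zero_iff _).1 (by simp [hi])
  exact det_eq_zero_of_column_eq_zero i fun j ↦ by simpa using congrFun hcol j

theorem diagonal_mul_mul_diagonal (hA : A.PosSemidef) (s : n → ℝ) :
    (diagonal (fun i ↦ (s i : 𝕜)) * A * diagonal (fun i ↦ (s i : 𝕜))).PosSemidef := by
  simpa [diagonal_conjTranspose, Pi.star_def] using
    hA.mul_mul_conjTranspose_same (diagonal fun i ↦ (s i : 𝕜))

theorem det_le_prod_diag (hA : A.PosSemidef) : A.det ≤ ∏ i, A i i := by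
  have hprod_nonneg : 0 ≤ ∏ i, A i i := Finset.prod_nonneg fun i _ ↦ hA.diag_nonneg
  choose a ha_nonneg ha using fun i ↦ RCLike.nonneg_iff_exists_ofReal.1 (hA.diag_nonneg (i := i))
  by_cases hzero : ∃ i, a i = 0
  · obtain ⟨i, hi⟩ := hzero
    rwa [hA.det_eq_zero_of_diag_eq_zero (i := i) (by simp [← ha i, hi])]
  push Not at hzero
  set s : n → ℝ := fun i ↦ (√(a i))⁻¹
  set B := diagonal (fun i ↦ (s i : 𝕜)) * A * diagonal (fun i ↦ (s i : 𝕜))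
  have hs : ∀ i, (s i : 𝕜) * A i i * s i = 1 := by
    intro i
    have : s i * a i * s i = 1 := by
      simp only [s]
      field_simp
      rw [Real.sq_sqrt (ha_nonneg i), div_self (hzero i)]
    rw [← ha i]
    exact_mod_cast this
  have hB : B.det ≤ 1 := (hA.diagonal_mul_mul_diagonal s).det_le_one_of_diag_eq_one fun i ↦ by
    simpa [B] using hs i
  have hdetB : B.det = (∏ i, (s i : 𝕜)) * A.det * ∏ i, (s i : 𝕜) := by
    simp [B, det_mul, det_diagonal]
  have hprod : (∏ i, (s i : 𝕜)) * (∏ i, A i i) * ∏ i, (s i : 𝕜) = 1 := by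
    simp only [← Finset.prod_mul_distrib, hs, Finset.prod_const_one]
  calc A.det = B.det * ∏ i, A i i := by linear_combination (-∏ i, A i i) * hdetB - A.det * hprod
    _ ≤ 1 * ∏ i, A i i := mul_le_mul_of_nonneg_right hB hprod_nonneg
    _ = ∏ i, A i i := one_mul _

end Matrix.PosSemidef

theorem hadamard_inequality {n : ℕ} (G : Matrix (Fin n) (Fin n) ℂ)
    (hG : G.PosSemidef) :
    (∏ i, G i i).im = 0 ∧ G.det.im = 0 ∧ G.det.re ≤ (∏ i, G i i).re := by
  have hprod : 0 ≤ ∏ i, G i i := Finset.prod_nonneg fun i _ ↦ hG.diag_nonneg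
  exact ⟨(Complex.nonneg_iff.1 hprod).2.symm, (Complex.nonneg_iff.1 hG.det_nonneg).2.symm,
    (Complex.le_def.1 hG.det_le_prod_diag).1⟩
end

section
/- For any 3×3 positive semidefinite complex matrix G, the immanant associated with the standard representation, imm_{(2,1)}(G) = 2·G_{11}G_{22}G_{33} − (G_{12}G_{23}G_{31} + G_{13}G_{21}G_{32}), is a nonnegative real number. -/
/-!
Hermitian symmetry makes the two 3-cycle terms complex conjugates `w` and `star w`, so the
immanant equals `2 (G₀₀ G₁₁ G₂₂ - re w)`. The `2 × 2` principal minors give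
`‖G i j‖ ^ 2 ≤ G i i * G j j`, and multiplying these over the three edges of the cycle gives
`re w ≤ ‖w‖ ≤ G₀₀ G₁₁ G₂₂`.
-/

open Matrix ComplexOrder

namespace Matrix.PosSemidef

open RCLike

variable {n 𝕜 : Type*} [RCLike 𝕜] {G : Matrix n n 𝕜}

theorem norm_apply_sq_le (hG : G.PosSemidef) (i j : n) :
    ‖G i j‖ ^ 2 ≤ re (G i i) * re (G j j) := by
  have hminor := (hG.submatrix ![i, j]).det_nonneg
  rw [det_fin_two, nonneg_iff] at hminor
  simp only [submatrix_apply, cons_val_zero, cons_val_one] at hminor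
  rw [← hG.isHermitian.apply j i, ← hG.isHermitian.coe_re_apply_self i,
    ← hG.isHermitian.coe_re_apply_self j, star_def, mul_conj] at hminor
  norm_cast at hminor
  simpa only [ofReal_re, sub_nonneg] using hminor.1

theorem norm_cyclic_mul_le (hG : G.PosSemidef) (i j k : n) :
    ‖G i j * G j k * G k i‖ ≤ re (G i i) * re (G j j) * re (G k k) := by
  have hi := (nonneg_iff.mp (hG.diag_nonneg (i := i))).1
  have hj := (nonneg_iff.mp (hG.diag_nonneg (i := j))).1
  have hk := (nonneg_iff.mp (hG.diag_nonneg (i := k))).1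
  rw [← pow_le_pow_iff_left₀ (norm_nonneg _) (by positivity) two_ne_zero]
  calc ‖G i j * G j k * G k i‖ ^ 2 = ‖G i j‖ ^ 2 * ‖G j k‖ ^ 2 * ‖G k i‖ ^ 2 := by
        rw [norm_mul, norm_mul]; ring
    _ ≤ (re (G i i) * re (G j j)) * (re (G j j) * re (G k k)) * (re (G k k) * re (G i i)) := by
        gcongr
        exacts [hG.norm_apply_sq_le i j, hG.norm_apply_sq_le j k, hG.norm_apply_sq_le k i]
    _ = (re (G i i) * re (G j j) * re (G k k)) ^ 2 := by ring

theorem star_cyclic_mul (hG : G.PosSemidef) (i j k : n) :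
    star (G i j * G j k * G k i) = G i k * G j i * G k j := by
  simp only [star_mul', hG.isHermitian.apply]
  ring

theorem immanant_two_one_nonneg (hG : G.PosSemidef) (i j k : n) :
    0 ≤ 2 * (G i i * G j j * G k k) - (G i j * G j k * G k i + G i k * G j i * G k j) := by
  set w := G i j * G j k * G k i
  have hw : w + star w = 2 * re w := add_conj w
  rw [← hG.star_cyclic_mul, hw, ← hG.isHermitian.coe_re_apply_self i,
    ← hG.isHermitian.coe_re_apply_self j, ← hG.isHermitian.coe_re_apply_self k]
  have hw_le := (re_le_norm w).trans (hG.norm_cyclic_mul_le i j k)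
  norm_cast
  linarith

end Matrix.PosSemidef

theorem imm21_nonneg (G : Matrix (Fin 3) (Fin 3) ℂ) (hG : G.PosSemidef) :
    (2 * (G 0 0 * G 1 1 * G 2 2) - (G 0 1 * G 1 2 * G 2 0 + G 0 2 * G 1 0 * G 2 1)).im = 0 ∧
      0 ≤ (2 * (G 0 0 * G 1 1 * G 2 2) - (G 0 1 * G 1 2 * G 2 0 + G 0 2 * G 1 0 * G 2 1)).re := by
  obtain ⟨hre, him⟩ := Complex.nonneg_iff.mp (hG.immanant_two_one_nonneg 0 1 2)
  exact ⟨him.symm, hre⟩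
end

section
/- For 3×3 positive semidefinite complex matrices G, half the standard immanant dominates the determinant: imm_{(2,1)}(G)/2 − det(G) ≥ 0. -/
/-!
For Hermitian `G` with diagonal `a, b, c` and `x = G 0 1`, `y = G 1 2`, `z = G 2 0`,
`imm₍₂,₁₎(G) / 2 - det G = a |y|² + b |z|² + c |x|² - 3 Re (x y z)`, a real number.
Positive semidefiniteness makes the 2 × 2 principal minors nonnegative, i.e. `|x|² ≤ a b`,
`|y|² ≤ b c`, `|z|² ≤ c a`; hence `|x y z|²` is at most the product of any two of
`a |y|², b |z|², c |x|²`, and pairwise AM–GM bounds `3 |x y z|` by their sum.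
-/

open Matrix ComplexOrder Complex ComplexConjugate

lemma Matrix.PosSemidef.normSq_apply_le {n : Type*} [Fintype n]
    {A : Matrix n n ℂ} (hA : A.PosSemidef) (i j : n) :
    normSq (A i j) ≤ (A i i).re * (A j j).re := by
  have hdet := (Complex.nonneg_iff.mp (hA.submatrix ![i, j]).det_nonneg).1
  have hji : A j i = conj (A i j) := (hA.isHermitian.apply j i).symm
  have hii : (A i i).im = 0 := conj_eq_iff_im.mp (hA.isHermitian.apply i i)
  have hjj : (A j j).im = 0 := conj_eq_iff_im.mp (hA.isHermitian.apply j j)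
  simp only [det_fin_two, submatrix_apply, cons_val_zero, cons_val_one, sub_re, mul_re, hji,
    conj_re, conj_im, hii, hjj] at hdet
  rw [normSq_apply]
  linarith

lemma three_mul_le_add_add_of_sq_le_mul {R : Type*} [Field R] [LinearOrder R]
    [IsStrictOrderedRing R] {x y z r : R} (hx : 0 ≤ x) (hy : 0 ≤ y) (hz : 0 ≤ z)
    (hxy : r ^ 2 ≤ x * y) (hyz : r ^ 2 ≤ y * z) (hzx : r ^ 2 ≤ z * x) :
    3 * r ≤ x + y + z := by
  linarith [two_mul_le_add_of_sq_le_mul hx hy hxy, two_mul_le_add_of_sq_le_mul hy hz hyz,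
    two_mul_le_add_of_sq_le_mul hz hx hzx]

/-- The immanant of the character `χ₍₂,₁₎` of `S₃`, which takes the values `2, 0, -1` on the
identity, the transpositions and the 3-cycles. -/
def Matrix.imm21 (G : Matrix (Fin 3) (Fin 3) ℂ) : ℂ :=
  2 * (G 0 0 * G 1 1 * G 2 2) - G 0 1 * G 1 2 * G 2 0 - G 0 2 * G 1 0 * G 2 1

lemma Matrix.IsHermitian.imm21_div_two_sub_det {G : Matrix (Fin 3) (Fin 3) ℂ}
    (hG : G.IsHermitian) :
    G.imm21 / 2 - G.det = ((G 0 0).re * normSq (G 1 2) + (G 1 1).re * normSq (G 2 0)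
      + (G 2 2).re * normSq (G 0 1) - 3 * (G 0 1 * G 1 2 * G 2 0).re : ℝ) := by
  have h10 : G 1 0 = conj (G 0 1) := (hG.apply 1 0).symm
  have h02 : G 0 2 = conj (G 2 0) := (hG.apply 0 2).symm
  have h21 : G 2 1 = conj (G 1 2) := (hG.apply 2 1).symm
  have h00 : G 0 0 = (G 0 0).re := (conj_eq_iff_re.mp (hG.apply 0 0)).symm
  have h11 : G 1 1 = (G 1 1).re := (conj_eq_iff_re.mp (hG.apply 1 1)).symm
  have h22 : G 2 2 = (G 2 2).re := (conj_eq_iff_re.mp (hG.apply 2 2)).symm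
  push_cast
  rw [← h00, ← h11, ← h22, re_eq_add_conj (G 0 1 * G 1 2 * G 2 0), map_mul, map_mul,
    normSq_eq_conj_mul_self, normSq_eq_conj_mul_self, normSq_eq_conj_mul_self,
    imm21, det_fin_three, h10, h02, h21]
  ring

lemma Matrix.PosSemidef.three_mul_re_le {G : Matrix (Fin 3) (Fin 3) ℂ} (hG : G.PosSemidef) :
    3 * (G 0 1 * G 1 2 * G 2 0).re ≤ (G 0 0).re * normSq (G 1 2) + (G 1 1).re * normSq (G 2 0)
      + (G 2 2).re * normSq (G 0 1) := by
  set w := G 0 1 * G 1 2 * G 2 0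
  have hw : ‖w‖ ^ 2 = normSq (G 0 1) * normSq (G 1 2) * normSq (G 2 0) := by
    rw [Complex.sq_norm, normSq_mul, normSq_mul]
  have h01 := hG.normSq_apply_le 0 1
  have h12 := hG.normSq_apply_le 1 2
  have h20 := hG.normSq_apply_le 2 0
  have ha := (Complex.nonneg_iff.mp (hG.diag_nonneg (i := 0))).1
  have hb := (Complex.nonneg_iff.mp (hG.diag_nonneg (i := 1))).1
  have hc := (Complex.nonneg_iff.mp (hG.diag_nonneg (i := 2))).1
  have hx := normSq_nonneg (G 0 1)
  have hy := normSq_nonneg (G 1 2)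
  have hz := normSq_nonneg (G 2 0)
  calc 3 * w.re ≤ 3 * ‖w‖ := by linarith [re_le_norm w]
    _ ≤ _ := by
      apply three_mul_le_add_add_of_sq_le_mul (mul_nonneg ha hy) (mul_nonneg hb hz)
        (mul_nonneg hc hx)
      · rw [hw]; linarith [mul_le_mul_of_nonneg_right h01 (mul_nonneg hy hz)]
      · rw [hw]; linarith [mul_le_mul_of_nonneg_right h12 (mul_nonneg hz hx)]
      · rw [hw]; linarith [mul_le_mul_of_nonneg_right h20 (mul_nonneg hx hy)]

theorem imm21_half_ge_det (G : Matrix (Fin 3) (Fin 3) ℂ) (hG : G.PosSemidef) :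
    ((2 * (G 0 0 * G 1 1 * G 2 2) - G 0 1 * G 1 2 * G 2 0 - G 0 2 * G 1 0 * G 2 1) / 2
        - G.det).im = 0 ∧
      0 ≤ ((2 * (G 0 0 * G 1 1 * G 2 2) - G 0 1 * G 1 2 * G 2 0 - G 0 2 * G 1 0 * G 2 1) / 2
        - G.det).re := by
  change (G.imm21 / 2 - G.det).im = 0 ∧ 0 ≤ (G.imm21 / 2 - G.det).re
  rw [hG.isHermitian.imm21_div_two_sub_det, ofReal_im, ofReal_re]
  exact ⟨rfl, sub_nonneg.mpr hG.three_mul_re_le⟩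
end

section
/- For any two positive semidefinite d×d complex matrices Y and Z, the map Ψ(Y,Z) = I·tr(Y)·tr(Z) + YZ + ZY − Y·tr(Z) − Z·tr(Y) − I·tr(YZ) yields a positive semidefinite matrix. -/
/-!
`Ψ(Y, Z)` is bilinear in `(Y, Z)` and every positive semidefinite matrix is a sum of rank-one
matrices `a aᴴ`, so it suffices to treat `Y = a aᴴ`, `Z = b bᴴ`. There `xᴴ Ψ(a aᴴ, b bᴴ) x`
expands to the determinant of the Gram matrix of `x, a, b`, which is nonnegative.
-/

open Matrix ComplexOrder

namespace Matrix

variable {n 𝕜 : Type*} [Fintype n] [DecidableEq n] [RCLike 𝕜]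

def cayleyHamiltonianMap : Matrix n n 𝕜 →ₗ[𝕜] Matrix n n 𝕜 →ₗ[𝕜] Matrix n n 𝕜 :=
  LinearMap.mk₂ 𝕜
    (fun Y Z ↦ (Y.trace * Z.trace) • 1 + Y * Z + Z * Y - Z.trace • Y - Y.trace • Z
      - (Y * Z).trace • 1)
    (fun _ _ _ ↦ by simp only [trace_add, add_mul, mul_add]; module)
    (fun _ _ _ ↦ by simp only [trace_smul, smul_mul_assoc, mul_smul_comm, smul_eq_mul]; module)
    (fun _ _ _ ↦ by simp only [trace_add, add_mul, mul_add]; module)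
    (fun _ _ _ ↦ by simp only [trace_smul, smul_mul_assoc, mul_smul_comm, smul_eq_mul]; module)

lemma IsHermitian.cayleyHamiltonianMap {Y Z : Matrix n n 𝕜} (hY : Y.IsHermitian)
    (hZ : Z.IsHermitian) : (cayleyHamiltonianMap Y Z).IsHermitian := by
  have hYZ : star (Y * Z).trace = (Y * Z).trace := by
    rw [← trace_conjTranspose, conjTranspose_mul, hY.eq, hZ.eq, trace_mul_comm]
  simp only [Matrix.cayleyHamiltonianMap, LinearMap.mk₂_apply, IsHermitian, conjTranspose_add,
    conjTranspose_sub, conjTranspose_smul, conjTranspose_mul, conjTranspose_one, hY.eq, hZ.eq,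
    ← trace_conjTranspose, hYZ, star_mul']
  abel

lemma star_dotProduct_cayleyHamiltonianMap_vecMulVec_mulVec (x a b : n → 𝕜) :
    star x ⬝ᵥ cayleyHamiltonianMap (vecMulVec a (star a)) (vecMulVec b (star b)) *ᵥ x
      = (gram 𝕜 ![WithLp.toLp 2 x, WithLp.toLp 2 a, WithLp.toLp 2 b]).det := by
  have inner_toLp (u v : n → 𝕜) :
      inner 𝕜 (WithLp.toLp 2 u) (WithLp.toLp 2 v) = star u ⬝ᵥ v :=
    dotProduct_comm _ _
  simp only [Matrix.cayleyHamiltonianMap, LinearMap.mk₂_apply, det_fin_three, gram_apply,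
    inner_toLp, cons_val_zero, cons_val_one, cons_val_two, Nat.succ_eq_add_one, Nat.reduceAdd,
    tail_cons, head_cons, vecMulVec_mul_vecMulVec, trace_vecMulVec, add_mulVec, sub_mulVec,
    smul_mulVec, one_mulVec, vecMulVec_mulVec, dotProduct_add, dotProduct_sub, dotProduct_smul,
    smul_dotProduct, smul_eq_mul, op_smul_eq_mul, dotProduct_comm a (star a),
    dotProduct_comm b (star b), dotProduct_comm a (star b)]
  ring

lemma posSemidef_cayleyHamiltonianMap_vecMulVec (a b : n → 𝕜) :
    (cayleyHamiltonianMap (vecMulVec a (star a)) (vecMulVec b (star b))).PosSemidef := by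
  refine .of_dotProduct_mulVec_nonneg
    ((posSemidef_vecMulVec_self_star a).isHermitian.cayleyHamiltonianMap
      (posSemidef_vecMulVec_self_star b).isHermitian) fun x ↦ ?_
  rw [star_dotProduct_cayleyHamiltonianMap_vecMulVec_mulVec]
  exact (posSemidef_gram 𝕜 _).det_nonneg

lemma PosSemidef.cayleyHamiltonianMap {Y Z : Matrix n n 𝕜} (hY : Y.PosSemidef)
    (hZ : Z.PosSemidef) : (cayleyHamiltonianMap Y Z).PosSemidef := by
  obtain ⟨_, a, rfl⟩ := posSemidef_iff_eq_sum_vecMulVec.mp hY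
  obtain ⟨_, b, rfl⟩ := posSemidef_iff_eq_sum_vecMulVec.mp hZ
  simp only [map_sum, LinearMap.sum_apply]
  exact posSemidef_sum _ fun _ _ ↦ posSemidef_sum _ fun _ _ ↦
    posSemidef_cayleyHamiltonianMap_vecMulVec _ _

end Matrix

theorem cayley_hamiltonian_map_positive {d : ℕ} (Y Z : Matrix (Fin d) (Fin d) ℂ)
    (hY : Y.PosSemidef) (hZ : Z.PosSemidef) :
    ((Y.trace * Z.trace) • (1 : Matrix (Fin d) (Fin d) ℂ) + Y * Z + Z * Y
      - Z.trace • Y - Y.trace • Z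
      - (Y * Z).trace • (1 : Matrix (Fin d) (Fin d) ℂ)).PosSemidef :=
  hY.cayleyHamiltonianMap hZ
end

section
/- For any positive semidefinite matrices X, Y, Z of size d×d, the matrix X·tr(YX)·tr(ZX) + XYXZX + XZXYX − XYX·tr(ZX) − X·tr(YXZX) − XZX·tr(YX) is positive semidefinite. -/
/-!
The matrix is additive in `Y` and in `Z`, so writing `Y = ∑ yᵢ yᵢᴴ` and `Z = ∑ zⱼ zⱼᴴ` reduces
the claim to rank-one `Y` and `Z`. For `Y = y yᴴ`, `Z = z zᴴ` the quadratic form of the matrix at `x`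
is the determinant of the Gram matrix of `x, y, z` for the semi-inner product `⟪u, w⟫ = uᴴ X w`,
which is nonnegative because that Gram matrix is positive semidefinite.
-/

open Matrix ComplexOrder

namespace Matrix

lemma isHermitian_vecMulVec_star {n α : Type*} [Mul α] [StarMul α] (y : n → α) :
    (vecMulVec y (star y)).IsHermitian := by
  rw [IsHermitian, conjTranspose_vecMulVec, star_star]

variable {n 𝕜 : Type*} [Fintype n] [RCLike 𝕜]

noncomputable def filteredCayleyHamilton (X Y Z : Matrix n n 𝕜) : Matrix n n 𝕜 :=
  ((Y * X).trace * (Z * X).trace) • X + X * Y * X * Z * X + X * Z * X * Y * X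
    - (Z * X).trace • (X * Y * X) - (Y * X * Z * X).trace • X
    - (Y * X).trace • (X * Z * X)

def gramWith {m : Type*} (X : Matrix n n 𝕜) (v : m → n → 𝕜) : Matrix m m 𝕜 :=
  of fun i j => star (v i) ⬝ᵥ (X *ᵥ v j)

lemma PosSemidef.posSemidef_gramWith {m : Type*} [Fintype m] {X : Matrix n n 𝕜}
    (hX : X.PosSemidef) (v : m → n → 𝕜) : (gramWith X v).PosSemidef := by
  convert hX.conjTranspose_mul_mul_same (of v)ᵀ using 1
  ext i j
  simp only [gramWith, of_apply, Matrix.mul_apply, conjTranspose_apply, transpose_apply, mulVec,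
    dotProduct, Pi.star_apply, Finset.mul_sum, Finset.sum_mul, mul_assoc]
  exact Finset.sum_comm

lemma IsHermitian.star_trace_mul {A B : Matrix n n 𝕜} (hA : A.IsHermitian) (hB : B.IsHermitian) :
    star (A * B).trace = (A * B).trace := by
  rw [← trace_conjTranspose, conjTranspose_mul, hA.eq, hB.eq, trace_mul_comm]

lemma IsHermitian.filteredCayleyHamilton {X Y Z : Matrix n n 𝕜} (hX : X.IsHermitian)
    (hY : Y.IsHermitian) (hZ : Z.IsHermitian) : (filteredCayleyHamilton X Y Z).IsHermitian := by
  have hXZX : (X * (Z * X)).IsHermitian := by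
    simpa only [hX.eq, mul_assoc] using isHermitian_mul_mul_conjTranspose X hZ
  simp only [Matrix.filteredCayleyHamilton, IsHermitian, conjTranspose_sub, conjTranspose_add,
    conjTranspose_smul, conjTranspose_mul, star_mul', hY.star_trace_mul hX,
    hZ.star_trace_mul hX, hX.eq, hY.eq, hZ.eq, mul_assoc, hY.star_trace_mul hXZX]
  abel

lemma filteredCayleyHamilton_sum_left {ι : Type*} (s : Finset ι) (X : Matrix n n 𝕜)
    (Y : ι → Matrix n n 𝕜) (Z : Matrix n n 𝕜) :
    filteredCayleyHamilton X (∑ i ∈ s, Y i) Z = ∑ i ∈ s, filteredCayleyHamilton X (Y i) Z := by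
  simp only [Matrix.filteredCayleyHamilton, Matrix.mul_sum, trace_sum, Finset.sum_mul,
    Finset.sum_smul, Finset.smul_sum, ← Finset.sum_add_distrib, ← Finset.sum_sub_distrib]

lemma filteredCayleyHamilton_sum_right {ι : Type*} (s : Finset ι) (X Y : Matrix n n 𝕜)
    (Z : ι → Matrix n n 𝕜) :
    filteredCayleyHamilton X Y (∑ i ∈ s, Z i) = ∑ i ∈ s, filteredCayleyHamilton X Y (Z i) := by
  simp only [Matrix.filteredCayleyHamilton, Matrix.sum_mul, trace_sum, Finset.mul_sum,
    Finset.sum_smul, Finset.smul_sum, ← Finset.sum_add_distrib, ← Finset.sum_sub_distrib]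

lemma star_dotProduct_filteredCayleyHamilton_vecMulVec_mulVec (X : Matrix n n 𝕜) (x y z : n → 𝕜) :
    star x ⬝ᵥ filteredCayleyHamilton X (vecMulVec y (star y)) (vecMulVec z (star z)) *ᵥ x
      = (gramWith X ![x, y, z]).det := by
  rw [det_fin_three]
  simp only [Matrix.filteredCayleyHamilton, gramWith, mul_vecMulVec, vecMulVec_mul,
    trace_vecMulVec, sub_mulVec, add_mulVec, smul_mulVec, vecMulVec_mulVec, dotProduct_mulVec,
    smul_dotProduct, dotProduct_sub, dotProduct_add, dotProduct_smul, of_apply, cons_val_zero,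
    cons_val_one, cons_val_two, head_cons, tail_cons, op_smul_eq_smul, smul_eq_mul,
    dotProduct_comm y, dotProduct_comm z]
  ring

lemma PosSemidef.filteredCayleyHamilton_vecMulVec {X : Matrix n n 𝕜} (hX : X.PosSemidef)
    (y z : n → 𝕜) :
    (filteredCayleyHamilton X (vecMulVec y (star y)) (vecMulVec z (star z))).PosSemidef := by
  refine .of_dotProduct_mulVec_nonneg (hX.isHermitian.filteredCayleyHamilton
    (isHermitian_vecMulVec_star y) (isHermitian_vecMulVec_star z)) fun x => ?_
  rw [star_dotProduct_filteredCayleyHamilton_vecMulVec_mulVec]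
  exact (hX.posSemidef_gramWith _).det_nonneg

lemma PosSemidef.filteredCayleyHamilton {X Y Z : Matrix n n 𝕜} (hX : X.PosSemidef)
    (hY : Y.PosSemidef) (hZ : Z.PosSemidef) : (filteredCayleyHamilton X Y Z).PosSemidef := by
  obtain ⟨_, y, rfl⟩ := posSemidef_iff_eq_sum_vecMulVec.mp hY
  obtain ⟨_, z, rfl⟩ := posSemidef_iff_eq_sum_vecMulVec.mp hZ
  rw [filteredCayleyHamilton_sum_left]
  refine posSemidef_sum _ fun i _ => ?_
  rw [filteredCayleyHamilton_sum_right]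
  exact posSemidef_sum _ fun j _ => hX.filteredCayleyHamilton_vecMulVec (y i) (z j)

end Matrix

theorem filtered_cayley_hamiltonian_map_positive {d : ℕ} (X Y Z : Matrix (Fin d) (Fin d) ℂ)
    (hX : X.PosSemidef) (hY : Y.PosSemidef) (hZ : Z.PosSemidef) :
    (((Y * X).trace * (Z * X).trace) • X + X * Y * X * Z * X + X * Z * X * Y * X
      - (Z * X).trace • (X * Y * X) - (Y * X * Z * X).trace • X
      - (Y * X).trace • (X * Z * X)).PosSemidef :=
  hX.filteredCayleyHamilton hY hZ
end

section
/- Purity inequality for separable states: if ρ_{AB} is a separable bipartite density matrix (a convex combination of tensor products of density matrices), then tr(ρ_B²) ≥ tr(ρ_{AB}²), where ρ_B is the partial trace of ρ_{AB} over system A. -/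
/-!
Write `ρ = ∑ᵢ pᵢ σᵢ ⊗ τᵢ`. Since `tr σᵢ = 1`, the reduced state is `ρ_B = ∑ᵢ pᵢ τᵢ`, so
`tr ρ² = ∑ᵢⱼ pᵢ pⱼ tr(σᵢσⱼ) tr(τᵢτⱼ)` and `tr ρ_B² = ∑ᵢⱼ pᵢ pⱼ tr(τᵢτⱼ)`. The inequality then
holds termwise, because for positive semidefinite `A, B` one has `0 ≤ tr(AB) ≤ tr A · tr B`:
writing `A = MᴴM`, `B = NᴴN`, the trace `tr(AB)` is the squared Frobenius norm of `NMᴴ`, and the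
Frobenius norm is submultiplicative.
-/

open Matrix ComplexOrder Kronecker

/-- A density matrix: positive semidefinite with unit trace. -/
def IsDensityMatrix {n : Type*} [Fintype n] [DecidableEq n]
    (ρ : Matrix n n ℂ) : Prop :=
  ρ.PosSemidef ∧ ρ.trace = 1

namespace Matrix

variable {m n ι R 𝕜 : Type*} [Fintype m]

/-- The partial trace over the first tensor factor, `tr_A`. -/
def traceLeft [AddCommMonoid R] (ρ : Matrix (m × n) (m × n) R) : Matrix n n R :=
  of fun b b' => ∑ a, ρ (a, b) (a, b')

lemma traceLeft_sum [AddCommMonoid R] (s : Finset ι) (ρ : ι → Matrix (m × n) (m × n) R) :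
    traceLeft (∑ i ∈ s, ρ i) = ∑ i ∈ s, traceLeft (ρ i) := by
  ext b b'
  simp only [traceLeft, of_apply, sum_apply]
  exact Finset.sum_comm

lemma traceLeft_smul [Semiring R] (c : R) (ρ : Matrix (m × n) (m × n) R) :
    traceLeft (c • ρ) = c • traceLeft ρ := by
  ext b b'
  simp [traceLeft, Finset.mul_sum]

lemma traceLeft_kronecker [Semiring R] (A : Matrix m m R) (B : Matrix n n R) :
    traceLeft (A ⊗ₖ B) = A.trace • B := by
  ext b b'
  simp [traceLeft, trace, Finset.sum_mul]

lemma trace_kronecker_mul_kronecker [Fintype n] [CommSemiring R] (A C : Matrix m m R)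
    (B D : Matrix n n R) :
    ((A ⊗ₖ B) * (C ⊗ₖ D)).trace = (A * C).trace * (B * D).trace := by
  rw [← mul_kronecker_mul, trace_kronecker]

lemma trace_sum_smul_mul_sum_smul [Fintype n] [Fintype ι] [CommSemiring R] (c : ι → R)
    (X : ι → Matrix n n R) :
    ((∑ i, c i • X i) * ∑ j, c j • X j).trace = ∑ i, ∑ j, c i * c j * (X i * X j).trace := by
  simp only [Finset.sum_mul_sum, trace_sum, smul_mul_smul_comm, trace_smul, smul_eq_mul]

section RCLike

variable [Fintype n] [RCLike 𝕜]

open scoped Matrix.Norms.Frobenius in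
lemma trace_conjTranspose_mul_self_eq_frobenius_norm_sq (A : Matrix m n 𝕜) :
    (Aᴴ * A).trace = ((‖A‖ ^ 2 : ℝ) : 𝕜) := by
  rw [frobenius_norm_def, ← Real.sqrt_eq_rpow, Real.sq_sqrt (by positivity)]
  simp only [Real.rpow_two, RCLike.ofReal_sum, RCLike.ofReal_pow]
  simp only [trace, diag, mul_apply, conjTranspose_apply, RCLike.star_def, RCLike.conj_mul]
  exact Finset.sum_comm

open scoped MatrixOrder Matrix.Norms.L2Operator in
lemma PosSemidef.exists_eq_conjTranspose_mul_self [DecidableEq n] {A : Matrix n n 𝕜}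
    (hA : A.PosSemidef) : ∃ N : Matrix n n 𝕜, A = Nᴴ * N :=
  CStarAlgebra.nonneg_iff_eq_star_mul_self.mp hA.nonneg

lemma PosSemidef.trace_mul_nonneg [DecidableEq n] {A B : Matrix n n 𝕜} (hA : A.PosSemidef)
    (hB : B.PosSemidef) : 0 ≤ (A * B).trace := by
  obtain ⟨N, rfl⟩ := hB.exists_eq_conjTranspose_mul_self
  rw [← Matrix.mul_assoc, trace_mul_comm, ← Matrix.mul_assoc]
  exact (hA.mul_mul_conjTranspose_same N).trace_nonneg

open scoped Matrix.Norms.Frobenius in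
lemma PosSemidef.trace_mul_le_trace_mul_trace [DecidableEq n] {A B : Matrix n n 𝕜}
    (hA : A.PosSemidef) (hB : B.PosSemidef) : (A * B).trace ≤ A.trace * B.trace := by
  obtain ⟨M, rfl⟩ := hA.exists_eq_conjTranspose_mul_self
  obtain ⟨N, rfl⟩ := hB.exists_eq_conjTranspose_mul_self
  have hcycle : (Mᴴ * M * (Nᴴ * N)).trace = ((N * Mᴴ)ᴴ * (N * Mᴴ)).trace := by
    rw [conjTranspose_mul, conjTranspose_conjTranspose, Matrix.mul_assoc, trace_mul_comm]
    simp only [Matrix.mul_assoc]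
  simp only [hcycle, trace_conjTranspose_mul_self_eq_frobenius_norm_sq, ← RCLike.ofReal_mul,
    RCLike.ofReal_le_ofReal]
  rw [← mul_pow, ← frobenius_norm_conjTranspose M, mul_comm]
  exact pow_le_pow_left₀ (norm_nonneg _) (frobenius_norm_mul _ _) 2

end RCLike

end Matrix

theorem purity_inequality_separable_general {dA dB : ℕ}
    (ρ : Matrix (Fin dA × Fin dB) (Fin dA × Fin dB) ℂ)
    (hsep : ∃ (m : ℕ) (p : Fin m → ℝ)
        (σ : Fin m → Matrix (Fin dA) (Fin dA) ℂ)
        (τ : Fin m → Matrix (Fin dB) (Fin dB) ℂ),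
        (∀ i, 0 ≤ p i) ∧ (∑ i, p i = 1) ∧
        (∀ i, IsDensityMatrix (σ i)) ∧ (∀ i, IsDensityMatrix (τ i)) ∧
        ρ = ∑ i, (p i : ℂ) • (σ i ⊗ₖ τ i)) :
    ((ρ * ρ).trace).re ≤
      ((Matrix.of (fun b b' : Fin dB => ∑ a : Fin dA, ρ (a, b) (a, b')) *
        Matrix.of (fun b b' : Fin dB => ∑ a : Fin dA, ρ (a, b) (a, b'))).trace).re := by
  obtain ⟨m, p, σ, τ, hp, -, hσ, hτ, hρ⟩ := hsep
  change (ρ * ρ).trace.re ≤ (traceLeft ρ * traceLeft ρ).trace.re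
  have hρB : traceLeft ρ = ∑ i, (p i : ℂ) • τ i := by
    simp only [hρ, traceLeft_sum, traceLeft_smul, traceLeft_kronecker, (hσ _).2, one_smul]
  refine (Complex.le_def.mp ?_).1
  rw [hρB, hρ, trace_sum_smul_mul_sum_smul, trace_sum_smul_mul_sum_smul]
  refine Finset.sum_le_sum fun i _ => Finset.sum_le_sum fun j _ => ?_
  have hσσ : (σ i * σ j).trace ≤ 1 := by
    simpa [(hσ i).2, (hσ j).2] using (hσ i).1.trace_mul_le_trace_mul_trace (hσ j).1
  rw [trace_kronecker_mul_kronecker]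
  gcongr
  · exact mul_nonneg (Complex.zero_le_real.mpr (hp i)) (Complex.zero_le_real.mpr (hp j))
  · exact mul_le_of_le_one_left ((hτ i).1.trace_mul_nonneg (hτ j).1) hσσ

theorem purity_inequality_separable {dA dB : ℕ}
    (ρ : Matrix (Fin dA × Fin dB) (Fin dA × Fin dB) ℂ)
    (hρ : IsDensityMatrix ρ)
    (hsep : ∃ (m : ℕ) (p : Fin m → ℝ)
        (σ : Fin m → Matrix (Fin dA) (Fin dA) ℂ)
        (τ : Fin m → Matrix (Fin dB) (Fin dB) ℂ),
        (∀ i, 0 ≤ p i) ∧ (∑ i, p i = 1) ∧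
        (∀ i, IsDensityMatrix (σ i)) ∧ (∀ i, IsDensityMatrix (τ i)) ∧
        ρ = ∑ i, (p i : ℂ) • (σ i ⊗ₖ τ i)) :
    ((ρ * ρ).trace).re ≤
      ((Matrix.of (fun b b' : Fin dB => ∑ a : Fin dA, ρ (a, b) (a, b')) *
        Matrix.of (fun b b' : Fin dB => ∑ a : Fin dA, ρ (a, b) (a, b'))).trace).re :=
  purity_inequality_separable_general ρ hsep
end
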